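/- Let (A, μ, α, B) be a quadratic Hom-Novikov superalgebra with α an automorphism satisfying B(α(x), y) = B(x, α(y)). Then the sub-adjacent bracket [x,y] = xy − (−1)^{|x||y|}yx with twisting map α and bilinear form B_α(x,y) := B(α(x), y) is a quadratic Hom-Lie superalgebra; in particular B_α is supersymmetric, nondegenerate, even, invariant (B_α([x,y],z) = B_α(x,[y,z])), and satisfies B_α(α(x),y) = B_α(x,α(y)). -/

import Mathlib

/-- The sub-adjacent super-commutator bracket `[x,y] = xy - (-1)^(|x||y|) yx`
for homogeneous `x` of degree `i` and `y` of degree `j`. -/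
def sbr {𝕜 A : Type*} [Field 𝕜] [AddCommGroup A] [Module 𝕜 A]
    (mul : A →ₗ[𝕜] A →ₗ[𝕜] A) (i j : ZMod 2) (x y : A) : A :=
  mul x y - ((-1 : 𝕜) ^ (i.val * j.val)) • mul y x

/-!
The twisted super-Jacobiator of the commutator bracket is a signed sum of three Hom-left-symmetry
defects `(xy)α(z) - α(x)(yz) - (-1)^{|x||y|} ((yx)α(z) - α(y)(xz))`, each of which vanishes in a
Hom-Novikov superalgebra. Since `α` is self-adjoint for `B`, the twisted form `B_α = B ∘ α` is
again supersymmetric and satisfies `B_α(xy, z) = B_α(x, yz)`; these two properties alone make a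
form invariant for the commutator bracket.
-/

section Signs

variable {R : Type*} [Monoid R] [HasDistribNeg R]

lemma neg_one_pow_mul_self_eq_one (n : ℕ) : (-1 : R) ^ n * (-1) ^ n = 1 := by
  rw [← pow_add, ← two_mul, pow_mul, neg_one_sq, one_pow]

lemma neg_one_pow_zmod_val_mul_add (i j k : ZMod 2) :
    (-1 : R) ^ (i.val * (j + k).val) = (-1) ^ (i.val * j.val) * (-1) ^ (i.val * k.val) := by
  rw [← pow_add]
  apply neg_one_pow_congr
  revert i j k
  decide

end Signs

section Bracket

variable {𝕜 A : Type*} [Field 𝕜] [AddCommGroup A] [Module 𝕜 A] (mul : A →ₗ[𝕜] A →ₗ[𝕜] A)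

lemma map_sbr {α : A →ₗ[𝕜] A} (hα_mul : ∀ x y : A, α (mul x y) = mul (α x) (α y))
    (i j : ZMod 2) (x y : A) : α (sbr mul i j x y) = sbr mul i j (α x) (α y) := by
  simp only [sbr, map_sub, map_smul, hα_mul]

lemma sbr_eq_neg_smul_sbr (i j : ZMod 2) (x y : A) :
    sbr mul i j x y = -(((-1 : 𝕜) ^ (i.val * j.val)) • sbr mul j i y x) := by
  rw [sbr, sbr, Nat.mul_comm j.val, smul_sub, smul_smul, neg_one_pow_mul_self_eq_one, one_smul,
    neg_sub]

def homLeftSymmDefect (α : A →ₗ[𝕜] A) (i j : ZMod 2) (x y z : A) : A :=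
  (mul (mul x y) (α z) - mul (α x) (mul y z))
    - ((-1 : 𝕜) ^ (i.val * j.val)) • (mul (mul y x) (α z) - mul (α y) (mul x z))

lemma sbr_hom_jacobiator_eq (α : A →ₗ[𝕜] A) (i j k : ZMod 2) (x y z : A) :
    ((-1 : 𝕜) ^ (i.val * k.val)) • sbr mul i (j + k) (α x) (sbr mul j k y z)
        + ((-1 : 𝕜) ^ (i.val * j.val)) • sbr mul j (k + i) (α y) (sbr mul k i z x)
        + ((-1 : 𝕜) ^ (j.val * k.val)) • sbr mul k (i + j) (α z) (sbr mul i j x y)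
      = -((-1 : 𝕜) ^ (i.val * k.val)) • homLeftSymmDefect mul α i j x y z
        + ((-1 : 𝕜) ^ (j.val * k.val) * (-1) ^ (i.val * k.val)) •
            homLeftSymmDefect mul α i k x z y
        - ((-1 : 𝕜) ^ (i.val * j.val)) • homLeftSymmDefect mul α j k y z x := by
  simp only [sbr, homLeftSymmDefect, neg_one_pow_zmod_val_mul_add, Nat.mul_comm k.val i.val,
    Nat.mul_comm k.val j.val, Nat.mul_comm j.val i.val, map_sub, map_smul, LinearMap.sub_apply,
    LinearMap.smul_apply]
  -- the cancellation needs `ε ^ 2 = 1` for each of the three signs `ε`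
  rcases neg_one_pow_eq_or 𝕜 (i.val * j.val) with hij | hij <;>
  rcases neg_one_pow_eq_or 𝕜 (i.val * k.val) with hik | hik <;>
  rcases neg_one_pow_eq_or 𝕜 (j.val * k.val) with hjk | hjk <;>
  · rw [hij, hik, hjk]; module

lemma sbr_hom_jacobi (G : ZMod 2 → Submodule 𝕜 A) (α : A →ₗ[𝕜] A)
    (hls : ∀ i j k : ZMod 2, ∀ x ∈ G i, ∀ y ∈ G j, ∀ z ∈ G k,
      mul (mul x y) (α z) - mul (α x) (mul y z)
        = ((-1 : 𝕜) ^ (i.val * j.val)) • (mul (mul y x) (α z) - mul (α y) (mul x z)))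
    {i j k : ZMod 2} {x y z : A} (hx : x ∈ G i) (hy : y ∈ G j) (hz : z ∈ G k) :
    ((-1 : 𝕜) ^ (i.val * k.val)) • sbr mul i (j + k) (α x) (sbr mul j k y z)
        + ((-1 : 𝕜) ^ (i.val * j.val)) • sbr mul j (k + i) (α y) (sbr mul k i z x)
        + ((-1 : 𝕜) ^ (j.val * k.val)) • sbr mul k (i + j) (α z) (sbr mul i j x y) = 0 := by
  have hdefect {a b c : ZMod 2} {u v w : A} (hu : u ∈ G a) (hv : v ∈ G b) (hw : w ∈ G c) :
      homLeftSymmDefect mul α a b u v w = 0 :=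
    sub_eq_zero.2 (hls a b c u hu v hv w hw)
  rw [sbr_hom_jacobiator_eq, hdefect hx hy hz, hdefect hx hz hy, hdefect hy hz hx]
  simp only [smul_zero, add_zero, sub_zero]

lemma sbr_left_invariant (G : ZMod 2 → Submodule 𝕜 A)
    (hmul_even : ∀ i j : ZMod 2, ∀ x ∈ G i, ∀ y ∈ G j, mul x y ∈ G (i + j))
    (F : A →ₗ[𝕜] A →ₗ[𝕜] 𝕜)
    (hF_mul : ∀ x y z : A, F (mul x y) z = F x (mul y z))
    (hF_sym : ∀ i j : ZMod 2, ∀ x ∈ G i, ∀ y ∈ G j,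
      F x y = ((-1 : 𝕜) ^ (i.val * j.val)) * F y x)
    {i j k : ZMod 2} {x y z : A} (hx : x ∈ G i) (hy : y ∈ G j) (hz : z ∈ G k) :
    F (sbr mul i j x y) z = F x (sbr mul j k y z) := by
  have hyxz : F (mul y x) z = (-1) ^ (i.val * j.val) * (-1) ^ (j.val * k.val) * F x (mul z y) := by
    rw [hF_mul, hF_sym j (i + k) y hy _ (hmul_even i k x hx z hz), hF_mul,
      neg_one_pow_zmod_val_mul_add, Nat.mul_comm j.val i.val]
  simp only [sbr, map_sub, map_smul, LinearMap.sub_apply, LinearMap.smul_apply, smul_eq_mul,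
    hF_mul x y z, hyxz, ← mul_assoc, neg_one_pow_mul_self_eq_one, one_mul]

end Bracket

section ComposedForm

variable {𝕜 A : Type*} [Field 𝕜] [AddCommGroup A] [Module 𝕜 A] (G : ZMod 2 → Submodule 𝕜 A)
  {mul : A →ₗ[𝕜] A →ₗ[𝕜] A} {α : A →ₗ[𝕜] A} {B : A →ₗ[𝕜] A →ₗ[𝕜] 𝕜}

lemma form_comp_mul_left (hB_inv : ∀ x y z : A, B (α x) (mul y z) = B (mul x y) (α z))
    (hBα : ∀ x y : A, B (α x) y = B x (α y)) (x y z : A) :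
    (B ∘ₗ α) (mul x y) z = (B ∘ₗ α) x (mul y z) :=
  (hBα _ _).trans (hB_inv x y z).symm

lemma form_comp_supersymm (hα_even : ∀ i : ZMod 2, ∀ x ∈ G i, α x ∈ G i)
    (hB_sym : ∀ i j : ZMod 2, ∀ x ∈ G i, ∀ y ∈ G j,
      B x y = ((-1 : 𝕜) ^ (i.val * j.val)) * B y x)
    (hBα : ∀ x y : A, B (α x) y = B x (α y))
    (i j : ZMod 2) (x : A) (hx : x ∈ G i) (y : A) (hy : y ∈ G j) :
    (B ∘ₗ α) x y = ((-1 : 𝕜) ^ (i.val * j.val)) * (B ∘ₗ α) y x := by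
  rw [LinearMap.comp_apply, hB_sym i j (α x) (hα_even i x hx) y hy, ← hBα y x]
  rfl

end ComposedForm

theorem stmt6_general
    (𝕜 A : Type*) [Field 𝕜] [AddCommGroup A] [Module 𝕜 A]
    (G : ZMod 2 → Submodule 𝕜 A)
    (mul : A →ₗ[𝕜] A →ₗ[𝕜] A) (α : A →ₗ[𝕜] A)
    (hmul_even : ∀ i j : ZMod 2, ∀ x ∈ G i, ∀ y ∈ G j, mul x y ∈ G (i + j))
    (hα_even : ∀ i : ZMod 2, ∀ x ∈ G i, α x ∈ G i)
    (hα_mul : ∀ x y : A, α (mul x y) = mul (α x) (α y))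
    (hls : ∀ i j k : ZMod 2, ∀ x ∈ G i, ∀ y ∈ G j, ∀ z ∈ G k,
      mul (mul x y) (α z) - mul (α x) (mul y z)
        = ((-1 : 𝕜) ^ (i.val * j.val)) • (mul (mul y x) (α z) - mul (α y) (mul x z)))
    (B : A →ₗ[𝕜] A →ₗ[𝕜] 𝕜)
    (hB_even : ∀ i j : ZMod 2, i ≠ j → ∀ x ∈ G i, ∀ y ∈ G j, B x y = 0)
    (hB_sym : ∀ i j : ZMod 2, ∀ x ∈ G i, ∀ y ∈ G j,
      B x y = ((-1 : 𝕜) ^ (i.val * j.val)) * B y x)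
    (hB_nd : ∀ x : A, (∀ y : A, B x y = 0) → x = 0)
    (hB_inv : ∀ x y z : A, B (α x) (mul y z) = B (mul x y) (α z))
    (hα_bij : Function.Bijective α)
    (hBα : ∀ x y : A, B (α x) y = B x (α y)) :
    (∀ i j : ZMod 2, ∀ x ∈ G i, ∀ y ∈ G j,
      α (sbr mul i j x y) = sbr mul i j (α x) (α y)) ∧
    (∀ i j : ZMod 2, ∀ x ∈ G i, ∀ y ∈ G j,
      sbr mul i j x y = -(((-1 : 𝕜) ^ (i.val * j.val)) • sbr mul j i y x)) ∧
    (∀ i j k : ZMod 2, ∀ x ∈ G i, ∀ y ∈ G j, ∀ z ∈ G k,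
      ((-1 : 𝕜) ^ (i.val * k.val)) • sbr mul i (j + k) (α x) (sbr mul j k y z)
        + ((-1 : 𝕜) ^ (i.val * j.val)) • sbr mul j (k + i) (α y) (sbr mul k i z x)
        + ((-1 : 𝕜) ^ (j.val * k.val)) • sbr mul k (i + j) (α z) (sbr mul i j x y) = 0) ∧
    (∀ i j : ZMod 2, ∀ x ∈ G i, ∀ y ∈ G j,
      B (α x) y = ((-1 : 𝕜) ^ (i.val * j.val)) * B (α y) x) ∧
    (∀ x : A, (∀ y : A, B (α x) y = 0) → x = 0) ∧
    (∀ i j : ZMod 2, i ≠ j → ∀ x ∈ G i, ∀ y ∈ G j, B (α x) y = 0) ∧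
    (∀ i j k : ZMod 2, ∀ x ∈ G i, ∀ y ∈ G j, ∀ z ∈ G k,
      B (α (sbr mul i j x y)) z = B (α x) (sbr mul j k y z)) ∧
    (∀ x y : A, B (α (α x)) y = B (α x) (α y)) :=
  have hBα_sym := form_comp_supersymm G hα_even hB_sym hBα
  ⟨fun i j x _ y _ => map_sbr mul hα_mul i j x y,
    fun i j x _ y _ => sbr_eq_neg_smul_sbr mul i j x y,
    fun _ _ _ _ hx _ hy _ hz => sbr_hom_jacobi mul G α hls hx hy hz,
    hBα_sym,
    fun x hx => (injective_iff_map_eq_zero α).1 hα_bij.1 x (hB_nd (α x) hx),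
    fun i j hij x hx y hy => hB_even i j hij (α x) (hα_even i x hx) y hy,
    fun _ _ _ _ hx _ hy _ hz =>
      sbr_left_invariant mul G hmul_even (B ∘ₗ α) (form_comp_mul_left hB_inv hBα) hBα_sym hx hy hz,
    fun x y => hBα (α x) y⟩

theorem stmt6
    (𝕜 A : Type*) [Field 𝕜] [AddCommGroup A] [Module 𝕜 A]
    (G : ZMod 2 → Submodule 𝕜 A) (hG : DirectSum.IsInternal G)
    (mul : A →ₗ[𝕜] A →ₗ[𝕜] A) (α : A →ₗ[𝕜] A)
    (hmul_even : ∀ i j : ZMod 2, ∀ x ∈ G i, ∀ y ∈ G j, mul x y ∈ G (i + j))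
    (hα_even : ∀ i : ZMod 2, ∀ x ∈ G i, α x ∈ G i)
    (hα_mul : ∀ x y : A, α (mul x y) = mul (α x) (α y))
    (hls : ∀ i j k : ZMod 2, ∀ x ∈ G i, ∀ y ∈ G j, ∀ z ∈ G k,
      mul (mul x y) (α z) - mul (α x) (mul y z)
        = ((-1 : 𝕜) ^ (i.val * j.val)) • (mul (mul y x) (α z) - mul (α y) (mul x z)))
    (hrn : ∀ i j k : ZMod 2, ∀ x ∈ G i, ∀ y ∈ G j, ∀ z ∈ G k,
      mul (mul x y) (α z) = ((-1 : 𝕜) ^ (j.val * k.val)) • mul (mul x z) (α y))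
    (B : A →ₗ[𝕜] A →ₗ[𝕜] 𝕜)
    (hB_even : ∀ i j : ZMod 2, i ≠ j → ∀ x ∈ G i, ∀ y ∈ G j, B x y = 0)
    (hB_sym : ∀ i j : ZMod 2, ∀ x ∈ G i, ∀ y ∈ G j,
      B x y = ((-1 : 𝕜) ^ (i.val * j.val)) * B y x)
    (hB_nd : ∀ x : A, (∀ y : A, B x y = 0) → x = 0)
    (hB_inv : ∀ x y z : A, B (α x) (mul y z) = B (mul x y) (α z))
    (hα_bij : Function.Bijective α)
    (hBα : ∀ x y : A, B (α x) y = B x (α y)) :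
    (∀ i j : ZMod 2, ∀ x ∈ G i, ∀ y ∈ G j,
      α (sbr mul i j x y) = sbr mul i j (α x) (α y)) ∧
    (∀ i j : ZMod 2, ∀ x ∈ G i, ∀ y ∈ G j,
      sbr mul i j x y = -(((-1 : 𝕜) ^ (i.val * j.val)) • sbr mul j i y x)) ∧
    (∀ i j k : ZMod 2, ∀ x ∈ G i, ∀ y ∈ G j, ∀ z ∈ G k,
      ((-1 : 𝕜) ^ (i.val * k.val)) • sbr mul i (j + k) (α x) (sbr mul j k y z)
        + ((-1 : 𝕜) ^ (i.val * j.val)) • sbr mul j (k + i) (α y) (sbr mul k i z x)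
        + ((-1 : 𝕜) ^ (j.val * k.val)) • sbr mul k (i + j) (α z) (sbr mul i j x y) = 0) ∧
    (∀ i j : ZMod 2, ∀ x ∈ G i, ∀ y ∈ G j,
      B (α x) y = ((-1 : 𝕜) ^ (i.val * j.val)) * B (α y) x) ∧
    (∀ x : A, (∀ y : A, B (α x) y = 0) → x = 0) ∧
    (∀ i j : ZMod 2, i ≠ j → ∀ x ∈ G i, ∀ y ∈ G j, B (α x) y = 0) ∧
    (∀ i j k : ZMod 2, ∀ x ∈ G i, ∀ y ∈ G j, ∀ z ∈ G k,
      B (α (sbr mul i j x y)) z = B (α x) (sbr mul j k y z)) ∧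
    (∀ x y : A, B (α (α x)) y = B (α x) (α y)) :=
  stmt6_general 𝕜 A G mul α hmul_even hα_even hα_mul hls B hB_even hB_sym hB_nd hB_inv hα_bij hBα
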